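/- arXiv:1605.09135 — 2 statements merged into one kernel-verified Lean document; each statement's English description precedes it below -/
import Mathlib

section
/- Let p be a prime and suppose the formal power series M_p(q) = (1/(q;q)_∞)(h(q) - p h(q^p)) has positive coefficients at q^n for all n ≥ 1. Then for every integer m ≥ 2, the series (1/(q;q)_∞)(h(q) - p^m h(q^{p^m})) also has positive coefficients at q^n for all n ≥ 1. -/
open PowerSeries Finset

/-- `h(q) = ∑_{n≥1} (-1)^{n+1} q^{n(n+1)/2}/(1-q^n)`, with `1/(1-q^n)` the geometric
series; defined coefficientwise (only terms with `n(n+1)/2 ≤ N` contribute to `q^N`). -/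
noncomputable def h : PowerSeries ℝ :=
  PowerSeries.mk fun N => ∑ n ∈ Finset.Icc 1 N,
    if n * (n + 1) / 2 ≤ N ∧ n ∣ (N - n * (n + 1) / 2) then (-1 : ℝ) ^ (n + 1) else 0

/-- Substitution `q ↦ q^d`: the coefficient of `q^{dn}` in `substPow d f` is the
coefficient of `q^n` in `f`, all other coefficients vanish. -/
noncomputable def substPow (d : ℕ) (f : PowerSeries ℝ) : PowerSeries ℝ :=
  PowerSeries.mk fun N => if d ∣ N then PowerSeries.coeff (N / d) f else 0

/-- `(q;q)_∞ = ∏_{n≥1} (1-q^n)`, defined coefficientwise by the stable truncation. -/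
noncomputable def euler : PowerSeries ℝ :=
  PowerSeries.mk fun N =>
    PowerSeries.coeff N (∏ n ∈ Finset.Icc 1 N, (1 - PowerSeries.X ^ n))

/-- `∏_{n ≥ 1, d ∤ n} (1-q^n)`, defined coefficientwise by the stable truncation. -/
noncomputable def eulerNotDvd (d : ℕ) : PowerSeries ℝ :=
  PowerSeries.mk fun N => PowerSeries.coeff N
    (∏ n ∈ (Finset.Icc 1 N).filter (fun n => ¬ d ∣ n), (1 - PowerSeries.X ^ n))

/-- `M_p(q) = (1/(q;q)_∞)(h(q) - p h(q^p))`. -/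
noncomputable def Mser (p : ℕ) : PowerSeries ℝ :=
  euler⁻¹ * (h - (p : PowerSeries ℝ) * substPow p h)

/-!
Write `E = (q;q)_∞`, `E_d = ∏_{d ∤ n} (1 - q^n)` and `σ_d` for the substitution `q ↦ q^d`.
Sorting the factors of `E` by divisibility by `d` gives `E = E_d · σ_d E`, hence
`p^k E_{p^k}⁻¹ σ_{p^k} M_p = E⁻¹ (p^k σ_{p^k} h - p^(k+1) σ_{p^(k+1)} h)`, and summing over `k < m`
telescopes to `E⁻¹ (h - p^m σ_{p^m} h)`. Every `E_d⁻¹` is a product of geometric series, so all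
summands have nonnegative coefficients, and the summand `k = 0` is `M_p` itself.

The infinite products are only given through their truncations, so identities between them are
proved modulo `X^(N+1)` for every `N`.
-/

section Congruence

variable {R : Type*} [CommRing R]

theorem sModEq_X_pow_iff {f g : R⟦X⟧} {k : ℕ} :
    f ≡ g [SMOD Ideal.span {(X : R⟦X⟧) ^ k}] ↔ ∀ j < k, coeff j f = coeff j g := by
  simp only [SModEq.sub_mem, Ideal.mem_span_singleton, X_pow_dvd_iff, map_sub, sub_eq_zero]

theorem SModEq.of_X_pow_le {f g : R⟦X⟧} {j k : ℕ} (hjk : j ≤ k)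
    (h : f ≡ g [SMOD Ideal.span {(X : R⟦X⟧) ^ k}]) :
    f ≡ g [SMOD Ideal.span {(X : R⟦X⟧) ^ j}] :=
  h.mono (Ideal.span_singleton_le_span_singleton.mpr (pow_dvd_pow X hjk))

theorem prod_one_sub_X_pow_sModEq {s t : Finset ℕ} {k : ℕ} (hst : s ⊆ t)
    (hk : ∀ n ∈ t \ s, k ≤ n) :
    ∏ n ∈ t, (1 - (X : R⟦X⟧) ^ n) ≡ ∏ n ∈ s, (1 - X ^ n) [SMOD Ideal.span {(X : R⟦X⟧) ^ k}] := by
  classical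
  have hfactor : ∀ n ∈ t \ s, 1 - (X : R⟦X⟧) ^ n ≡ 1 [SMOD Ideal.span {(X : R⟦X⟧) ^ k}] :=
    fun n hn => by
      rw [SModEq.sub_mem, sub_sub_cancel_left, Ideal.neg_mem_iff, Ideal.mem_span_singleton]
      exact pow_dvd_pow X (hk n hn)
  rw [← prod_sdiff hst]
  simpa using (SModEq.prod hfactor).mul (SModEq.refl (∏ n ∈ s, (1 - (X : R⟦X⟧) ^ n)))

theorem SModEq.expand {f g : R⟦X⟧} {k d : ℕ} (hd : d ≠ 0)
    (h : f ≡ g [SMOD Ideal.span {(X : R⟦X⟧) ^ k}]) :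
    PowerSeries.expand d hd f ≡ PowerSeries.expand d hd g
      [SMOD Ideal.span {(X : R⟦X⟧) ^ (d * k)}] := by
  rw [SModEq.sub_mem, Ideal.mem_span_singleton] at h ⊢
  simpa [pow_mul] using map_dvd (PowerSeries.expand d hd) h

theorem SModEq.inv {k : Type*} [Field k] {I : Ideal k⟦X⟧} {f g : k⟦X⟧}
    (hf : constantCoeff f ≠ 0) (hg : constantCoeff g ≠ 0) (h : f ≡ g [SMOD I]) :
    f⁻¹ ≡ g⁻¹ [SMOD I] := by
  have hinv : f⁻¹ - g⁻¹ = f⁻¹ * g⁻¹ * -(f - g) := by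
    linear_combination
      g⁻¹ * PowerSeries.inv_mul_cancel f hf - f⁻¹ * PowerSeries.inv_mul_cancel g hg
  rw [SModEq.sub_mem] at h ⊢
  rw [hinv]
  exact I.mul_mem_left _ (I.neg_mem h)

end Congruence

section NonnegCoeffs

variable (R : Type*) [CommSemiring R] [PartialOrder R] [IsOrderedRing R]

def nonnegCoeffs : Subsemiring R⟦X⟧ where
  carrier := {f | ∀ n, 0 ≤ coeff n f}
  mul_mem' {f g} hf hg n := by
    rw [coeff_mul]
    exact sum_nonneg fun x _ => mul_nonneg (hf x.1) (hg x.2)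
  one_mem' n := by
    rw [coeff_one]
    split_ifs <;> simp
  add_mem' {f g} hf hg n := by
    rw [map_add]
    exact add_nonneg (hf n) (hg n)
  zero_mem' n := by simp

end NonnegCoeffs

theorem substPow_eq_expand {d : ℕ} (hd : d ≠ 0) : substPow d = expand d hd := by
  ext f N
  rw [substPow, coeff_mk, coeff_expand]

theorem substPow_one (f : ℝ⟦X⟧) : substPow 1 f = f := by
  rw [substPow_eq_expand one_ne_zero, expand_one_apply]

theorem substPow_mem_nonnegCoeffs {f : ℝ⟦X⟧} (hf : f ∈ nonnegCoeffs ℝ) (d : ℕ) :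
    substPow d f ∈ nonnegCoeffs ℝ := fun N => by
  rw [substPow, coeff_mk]
  split_ifs
  exacts [hf _, le_rfl]

theorem substPow_mk_one_mul_one_sub_X_pow {n : ℕ} (hn : n ≠ 0) :
    substPow n (mk 1) * (1 - X ^ n) = 1 := by
  simpa [substPow_eq_expand hn] using congrArg (expand n hn) (mk_one_mul_one_sub_eq_one ℝ)

theorem expand_inv {k : Type*} [Field k] {d : ℕ} (hd : d ≠ 0) {f : k⟦X⟧}
    (hf : constantCoeff f ≠ 0) : expand d hd f⁻¹ = (expand d hd f)⁻¹ := by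
  rw [eq_inv_iff_mul_eq_one (by rwa [constantCoeff_expand]), ← map_mul,
    PowerSeries.inv_mul_cancel f hf, map_one]

section EulerProduct

variable (R : Type*) [CommRing R] (P : ℕ → Prop) [DecidablePred P]

noncomputable def partialEulerProd (N : ℕ) : R⟦X⟧ :=
  ∏ n ∈ (Icc 1 N).filter P, (1 - X ^ n)

noncomputable def eulerProd : R⟦X⟧ :=
  mk fun N => coeff N (partialEulerProd R P N)

variable {R P}

theorem constantCoeff_partialEulerProd (N : ℕ) :
    constantCoeff (partialEulerProd R P N) = 1 := by
  rw [partialEulerProd, map_prod]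
  refine prod_eq_one fun n hn => ?_
  have hn0 : n ≠ 0 := by simp at hn; omega
  simp [hn0]

theorem constantCoeff_eulerProd : constantCoeff (eulerProd R P) = 1 := by
  rw [← coeff_zero_eq_constantCoeff_apply, eulerProd, coeff_mk, coeff_zero_eq_constantCoeff_apply,
    constantCoeff_partialEulerProd]

theorem partialEulerProd_sModEq {M N : ℕ} (hNM : N ≤ M) :
    partialEulerProd R P M ≡ partialEulerProd R P N
      [SMOD Ideal.span {(X : R⟦X⟧) ^ (N + 1)}] :=
  prod_one_sub_X_pow_sModEq (filter_subset_filter P (Icc_subset_Icc_right hNM))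
    fun n hn => by
      simp only [mem_sdiff, mem_filter, mem_Icc] at hn
      by_contra! hnN
      exact hn.2 ⟨⟨hn.1.1.1, by omega⟩, hn.1.2⟩

theorem eulerProd_sModEq (N : ℕ) :
    eulerProd R P ≡ partialEulerProd R P N [SMOD Ideal.span {(X : R⟦X⟧) ^ (N + 1)}] :=
  sModEq_X_pow_iff.mpr fun j hj => by
    rw [eulerProd, coeff_mk]
    exact (sModEq_X_pow_iff.mp (partialEulerProd_sModEq (Nat.lt_succ_iff.mp hj)) j
      j.lt_succ_self).symm

theorem inv_partialEulerProd_mem_nonnegCoeffs (N : ℕ) :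
    (partialEulerProd ℝ P N)⁻¹ ∈ nonnegCoeffs ℝ := by
  have hinv : (partialEulerProd ℝ P N)⁻¹ = ∏ n ∈ (Icc 1 N).filter P, substPow n (mk 1) := by
    symm
    rw [eq_inv_iff_mul_eq_one (by simp [constantCoeff_partialEulerProd]), partialEulerProd,
      ← prod_mul_distrib]
    exact prod_eq_one fun n hn => substPow_mk_one_mul_one_sub_X_pow (by simp at hn; omega)
  rw [hinv]
  exact prod_mem fun n _ => substPow_mem_nonnegCoeffs (fun j => by simp) n

theorem inv_eulerProd_mem_nonnegCoeffs : (eulerProd ℝ P)⁻¹ ∈ nonnegCoeffs ℝ := fun N => by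
  have hcongr := (eulerProd_sModEq (R := ℝ) (P := P) N).inv (by simp [constantCoeff_eulerProd])
    (by simp [constantCoeff_partialEulerProd])
  rw [sModEq_X_pow_iff.mp hcongr N N.lt_succ_self]
  exact inv_partialEulerProd_mem_nonnegCoeffs N N

end EulerProduct

theorem euler_eq_eulerProd : euler = eulerProd ℝ fun _ => True := by
  ext N
  simp [euler, eulerProd, partialEulerProd]

theorem eulerNotDvd_eq_eulerProd (d : ℕ) : eulerNotDvd d = eulerProd ℝ fun n => ¬ d ∣ n := rfl

theorem eulerNotDvd_one : eulerNotDvd 1 = 1 := by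
  ext N
  simp [eulerNotDvd]

theorem Nat.Icc_filter_dvd_eq_image {d : ℕ} (hd : d ≠ 0) (N : ℕ) :
    (Icc 1 (d * N)).filter (d ∣ ·) = (Icc 1 N).image (d * ·) := by
  ext n
  simp only [mem_filter, mem_Icc, mem_image]
  constructor
  · rintro ⟨⟨hn1, hnN⟩, k, rfl⟩
    exact ⟨k, ⟨Nat.pos_of_mul_pos_left hn1,
      Nat.le_of_mul_le_mul_left hnN (Nat.pos_of_ne_zero hd)⟩, rfl⟩
  · rintro ⟨k, ⟨hk1, hkN⟩, rfl⟩
    exact ⟨⟨Nat.mul_pos (Nat.pos_of_ne_zero hd) hk1, Nat.mul_le_mul_left d hkN⟩,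
      dvd_mul_right d k⟩

section EulerFactorization

variable {R : Type*} [CommRing R]

theorem expand_partialEulerProd_true {d : ℕ} (hd : d ≠ 0) (N : ℕ) :
    expand d hd (partialEulerProd R (fun _ => True) N) = partialEulerProd R (d ∣ ·) (d * N) := by
  rw [partialEulerProd, partialEulerProd, Nat.Icc_filter_dvd_eq_image hd,
    prod_image fun _ _ _ _ => Nat.eq_of_mul_eq_mul_left (Nat.pos_of_ne_zero hd), map_prod]
  simp [pow_mul]

theorem partialEulerProd_true_eq_not_dvd_mul_dvd (d N : ℕ) :
    partialEulerProd R (fun _ => True) N =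
      partialEulerProd R (¬ d ∣ ·) N * partialEulerProd R (d ∣ ·) N := by
  simp only [partialEulerProd, filter_true]
  rw [mul_comm, prod_filter_mul_prod_filter_not]

end EulerFactorization

theorem euler_eq_eulerNotDvd_mul_expand {d : ℕ} (hd : d ≠ 0) :
    euler = eulerNotDvd d * expand d hd euler := by
  ext N
  have key : euler ≡ eulerNotDvd d * expand d hd euler
      [SMOD Ideal.span {(X : ℝ⟦X⟧) ^ (N + 1)}] := by
    have hdN : N + 1 ≤ d * N + 1 := by nlinarith [Nat.pos_of_ne_zero hd]
    have hdN' : N + 1 ≤ d * (N + 1) := by nlinarith [Nat.pos_of_ne_zero hd]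
    rw [euler_eq_eulerProd, eulerNotDvd_eq_eulerProd]
    refine ((eulerProd_sModEq (d * N)).of_X_pow_le hdN).trans ?_
    rw [partialEulerProd_true_eq_not_dvd_mul_dvd d, ← expand_partialEulerProd_true hd]
    have h1 := (eulerProd_sModEq (R := ℝ) (P := fun n => ¬ d ∣ n) (d * N)).of_X_pow_le hdN
    have h2 := ((eulerProd_sModEq (R := ℝ) (P := fun _ => True) N).expand hd).of_X_pow_le hdN'
    exact (h1.mul h2).symm
  exact sModEq_X_pow_iff.mp key N N.lt_succ_self

theorem eulerNotDvd_inv_mul_substPow {p : ℕ} (hp : p ≠ 0) (k : ℕ) (f : ℝ⟦X⟧) :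
    (eulerNotDvd (p ^ k))⁻¹ * substPow (p ^ k) (euler⁻¹ * (f - p * substPow p f)) =
      euler⁻¹ * (substPow (p ^ k) f - p * substPow (p ^ (k + 1)) f) := by
  have hd : p ^ k ≠ 0 := pow_ne_zero k hp
  have heuler : constantCoeff euler ≠ 0 := by
    simp [euler_eq_eulerProd, constantCoeff_eulerProd]
  rw [pow_succ, substPow_eq_expand (mul_ne_zero hd hp), expand_mul (p ^ k) hd p hp,
    substPow_eq_expand hd, substPow_eq_expand hp, map_mul, expand_inv hd heuler, map_sub,
    map_mul, map_natCast]
  conv_rhs => rw [euler_eq_eulerNotDvd_mul_expand hd, PowerSeries.mul_inv_rev]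
  ring

theorem euler_inv_mul_sub_substPow_eq_sum {p : ℕ} (hp : p ≠ 0) (m : ℕ) (f : ℝ⟦X⟧) :
    euler⁻¹ * (f - p ^ m * substPow (p ^ m) f) =
      ∑ k ∈ range m, (p : ℝ⟦X⟧) ^ k *
        ((eulerNotDvd (p ^ k))⁻¹ * substPow (p ^ k) (euler⁻¹ * (f - p * substPow p f))) := by
  set g : ℕ → ℝ⟦X⟧ := fun k => euler⁻¹ * ((p : ℝ⟦X⟧) ^ k * substPow (p ^ k) f)
  have hterm : ∀ k, (p : ℝ⟦X⟧) ^ k *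
      (euler⁻¹ * (substPow (p ^ k) f - p * substPow (p ^ (k + 1)) f)) = g k - g (k + 1) :=
    fun k => by ring
  simp_rw [eulerNotDvd_inv_mul_substPow hp, hterm, sum_range_sub', g, pow_zero, one_mul,
    substPow_one]
  ring

theorem coeff_zero_Mser (p : ℕ) : coeff 0 (Mser p) = 0 := by
  simp [Mser, h, substPow]

theorem Mser_mem_nonnegCoeffs {p : ℕ} (hMp : ∀ n : ℕ, 1 ≤ n → 0 < coeff n (Mser p)) :
    Mser p ∈ nonnegCoeffs ℝ
  | 0 => (coeff_zero_Mser p).ge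
  | n + 1 => (hMp (n + 1) n.succ_pos).le

/-- Theorem 1.2 of Xiong: positivity of `M_p` implies positivity of `M_{p^m}`. -/
theorem xiong_thm_1_2 (p : ℕ) (hp : p.Prime)
    (hMp : ∀ n : ℕ, 1 ≤ n → 0 < PowerSeries.coeff n (Mser p))
    (m : ℕ) (hm : 2 ≤ m) :
    ∀ n : ℕ, 1 ≤ n →
      0 < PowerSeries.coeff n
        (euler⁻¹ * (h - (p : PowerSeries ℝ) ^ m * substPow (p ^ m) h)) := by
  intro n hn
  obtain ⟨m, rfl⟩ : ∃ m', m = m' + 1 := ⟨m - 1, by omega⟩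
  have hterm : ∀ k, (p : ℝ⟦X⟧) ^ k * ((eulerNotDvd (p ^ k))⁻¹ * substPow (p ^ k) (Mser p))
      ∈ nonnegCoeffs ℝ := fun k =>
    mul_mem (pow_mem (natCast_mem _ p) k) (mul_mem inv_eulerProd_mem_nonnegCoeffs
      (substPow_mem_nonnegCoeffs (Mser_mem_nonnegCoeffs hMp) _))
  rw [euler_inv_mul_sub_substPow_eq_sum hp.ne_zero, sum_range_succ', map_add, map_sum]
  refine add_pos_of_nonneg_of_pos (sum_nonneg fun k _ => hterm (k + 1) n) ?_
  rw [pow_zero, pow_zero, one_mul, eulerNotDvd_one, inv_one, one_mul, substPow_one]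
  exact hMp n hn
end

section
/- The coefficient of q^N in (1/(q;q)_∞)·h(q^m) equals the weighted count C_m(N) of m-strings over all partitions of N, where an m-string of a partition λ is a set of parts of λ of the form m(1+k), m(3+k), ..., m(2j-1+k) for some integers j ≥ 1 and 0 ≤ k ≤ j, with weight 1 if k = 0 or k = j, and weight 2 otherwise. -/
open PowerSeries Finset

/-- The weight of an `m`-string with parameters `(j,k)`. -/
def strWt (j k : ℕ) : ℕ := if k = 0 ∨ k = j then 1 else 2

/-- `C_m(N)`: the weighted count of `m`-strings `m(1+k), m(3+k), …, m(2j-1+k)`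
(`j ≥ 1`, `0 ≤ k ≤ j`) over all partitions of `N`.  (Terms with `j > N` vanish since
then `m(2j-1+k) > N` cannot be a part.) -/
noncomputable def Cstr (m N : ℕ) : ℕ :=
  ∑ P : Nat.Partition N, ∑ j ∈ Finset.Icc 1 N, ∑ k ∈ Finset.range (j + 1),
    if ∀ i ∈ Finset.Icc 1 j, m * (2 * i - 1 + k) ∈ P.parts then strWt j k else 0

/-!
Since `1/(q;q)_∞ = ∑ p(n) qⁿ` and the partitions of `N` containing a fixed `m`-string of total
size `m j (j + k)` are, after removing the string, the partitions of `N - m j (j + k)`, the claim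
reduces to the `q`-series identity `h(q) = ∑_{j ≥ 1} ∑_{k = 0}^{j} wt(j, k) q^{j (j + k)}`.

Compare the coefficients of `q^M`, `M = 2^α m₀` with `m₀` odd. On the left, the terms of `h`
correspond to the factorisations `2M = n s` with `n < s` of opposite parity; the odd factor is a
divisor `d` of `m₀`, and the sign is `+` exactly when `d² < 2M`. On the right, the weighted strings
correspond to the divisors `a` of `M` with `M < 2a² ≤ 4M`. Writing `a = 2^β d`, the count for a
fixed `d` telescopes in `β`, and the boundary term left over is matched by `d ↦ m₀ / d` with the
divisors `d` for which `2M < d²`.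
-/

open scoped PowerSeries.WithPiTopology

theorem coeff_prod_one_sub_X_pow_of_subset {R : Type*} [CommRing R] {s t : Finset ℕ} {d : ℕ}
    (hst : s ⊆ t) (hlarge : ∀ n ∈ t \ s, d < n) :
    coeff d (∏ n ∈ t, (1 - X ^ n : R⟦X⟧)) = coeff d (∏ n ∈ s, (1 - X ^ n : R⟦X⟧)) := by
  have hdvd : X ^ (d + 1) ∣ ∏ n ∈ t \ s, (1 - X ^ n : R⟦X⟧) - 1 := by
    refine prod_induction _ (fun f => X ^ (d + 1) ∣ f - 1) (fun f g hf hg => ?_)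
      (by simp) fun n hn => ?_
    · have : f * g - 1 = f * (g - 1) + (f - 1) := by ring
      exact this ▸ dvd_add (dvd_mul_of_dvd_right hg f) hf
    · simpa using pow_dvd_pow X (hlarge n hn)
  rw [← prod_sdiff hst, ← sub_eq_zero, ← map_sub, ← sub_one_mul]
  exact (X_pow_dvd_iff.mp (dvd_mul_of_dvd_left hdvd _)) d (Nat.lt_succ_self d)

theorem hasProd_euler : HasProd (fun i => (1 - X ^ (i + 1) : ℝ⟦X⟧)) euler := by
  rw [HasProd, WithPiTopology.tendsto_iff_coeff_tendsto]
  refine fun d => tendsto_atTop_of_eventually_const fun s (hs : s ≥ range d) => ?_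
  have hshift : ∏ i ∈ s, (1 - X ^ (i + 1) : ℝ⟦X⟧) =
      ∏ n ∈ s.map (addRightEmbedding 1), (1 - X ^ n) :=
    (prod_map s (addRightEmbedding 1) fun n => (1 - X ^ n : ℝ⟦X⟧)).symm
  rw [euler, coeff_mk, hshift]
  refine coeff_prod_one_sub_X_pow_of_subset (fun n hn => ?_) fun n hn => ?_
  · obtain ⟨h1, h2⟩ := mem_Icc.mp hn
    exact mem_map.mpr ⟨n - 1, hs (mem_range.mpr (by omega)), by simp; omega⟩
  · obtain ⟨hn, hnot⟩ := mem_sdiff.mp hn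
    obtain ⟨i, -, rfl⟩ := mem_map.mp hn
    simp only [addRightEmbedding_apply, mem_Icc, not_and, not_le] at hnot ⊢
    omega

theorem euler_mul_mk_card_partition :
    euler * PowerSeries.mk (fun n => (Fintype.card n.Partition : ℝ)) = 1 := by
  have hgen := Nat.Partition.hasProd_powerSeriesMk_card_restricted ℝ (fun _ => True)
  simp only [if_true, Nat.Partition.restricted, implies_true, filter_true, card_univ] at hgen
  refine (hasProd_euler.mul hgen).unique ?_
  convert hasProd_one with i
  simp_rw [pow_mul]
  exact WithPiTopology.one_sub_mul_tsum_pow_of_constantCoeff_eq_zero (by simp)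

theorem coeff_inv_euler (n : ℕ) : coeff n euler⁻¹ = Fintype.card n.Partition := by
  have h := euler_mul_mk_card_partition
  have h0 : constantCoeff euler ≠ 0 := fun h0 => by
    simpa [h0] using congrArg constantCoeff h
  rw [(PowerSeries.inv_eq_iff_mul_eq_one h0).mpr (by rw [mul_comm, h]), coeff_mk]

def Nat.Partition.subtypeLePartsEquiv {s : Multiset ℕ} (hs : ∀ x ∈ s, 0 < x) {N : ℕ}
    (hN : s.sum ≤ N) : {P : N.Partition // s ≤ P.parts} ≃ (N - s.sum).Partition where
  toFun P :=
    { parts := P.1.parts - s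
      parts_pos := fun hi => P.1.parts_pos (Multiset.mem_of_le (Multiset.sub_le_self _ _) hi)
      parts_sum := by
        have h := congrArg Multiset.sum (tsub_add_cancel_of_le P.2)
        rw [Multiset.sum_add, P.1.parts_sum] at h
        omega }
  invFun Q :=
    ⟨{ parts := Q.parts + s
       parts_pos := fun hi => (Multiset.mem_add.mp hi).elim Q.parts_pos (hs _)
       parts_sum := by rw [Multiset.sum_add, Q.parts_sum]; omega }, le_add_self⟩
  left_inv P := Subtype.ext <| Nat.Partition.ext <| tsub_add_cancel_of_le P.2
  right_inv Q := Nat.Partition.ext <| add_tsub_cancel_right Q.parts s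

theorem Nat.Partition.card_filter_le_parts {s : Multiset ℕ} (hs : ∀ x ∈ s, 0 < x) (N : ℕ) :
    #{P : N.Partition | s ≤ P.parts} =
      if s.sum ≤ N then Fintype.card (N - s.sum).Partition else 0 := by
  split_ifs with hN
  · rw [← Fintype.card_subtype]
    exact Fintype.card_congr (subtypeLePartsEquiv hs hN)
  · refine Finset.card_eq_zero.mpr (filter_eq_empty_iff.mpr fun P _ hle => hN ?_)
    obtain ⟨u, hu⟩ := Multiset.le_iff_exists_add.mp hle
    have h := P.parts_sum
    rw [hu, Multiset.sum_add] at h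
    omega

theorem sum_Icc_two_mul_sub_one_add (j k : ℕ) : ∑ i ∈ Icc 1 j, (2 * i - 1 + k) = j * (j + k) := by
  induction j with
  | zero => simp
  | succ j ih =>
    rw [sum_Icc_succ_top (by omega), ih]
    have : 2 * (j + 1) - 1 = 2 * j + 1 := by omega
    rw [this]
    ring

theorem card_filter_string_mem_parts {m : ℕ} (hm : 0 < m) (N j k : ℕ) :
    #{P : N.Partition | ∀ i ∈ Icc 1 j, m * (2 * i - 1 + k) ∈ P.parts} =
      if m * (j * (j + k)) ≤ N then Fintype.card (N - m * (j * (j + k))).Partition else 0 := by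
  set S := (Icc 1 j).image fun i => m * (2 * i - 1 + k)
  have hinj : Set.InjOn (fun i => m * (2 * i - 1 + k)) (Icc 1 j) := fun a ha b hb hab => by
    simp only [coe_Icc, Set.mem_Icc] at ha hb
    have := Nat.eq_of_mul_eq_mul_left hm hab
    omega
  have hsum : S.val.sum = m * (j * (j + k)) := by
    rw [sum_val, sum_image hinj]
    simp only [id]
    rw [← mul_sum, sum_Icc_two_mul_sub_one_add]
  have hpos : ∀ x ∈ S.val, 0 < x := fun x hx => by
    obtain ⟨i, hi, rfl⟩ := mem_image.mp (mem_val.mp hx)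
    have := (mem_Icc.mp hi).1
    exact Nat.mul_pos hm (by omega)
  rw [← hsum, ← Nat.Partition.card_filter_le_parts hpos]
  congr 1
  ext P
  simp only [mem_filter, mem_univ, true_and, Multiset.le_iff_subset S.nodup, S,
    Multiset.subset_iff, mem_val, forall_mem_image]

theorem Cstr_eq_sum {m : ℕ} (hm : 0 < m) (N : ℕ) :
    Cstr m N = ∑ j ∈ Icc 1 N, ∑ k ∈ range (j + 1),
      (if m * (j * (j + k)) ≤ N then Fintype.card (N - m * (j * (j + k))).Partition else 0) *
        strWt j k := by
  rw [Cstr, sum_comm]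
  refine sum_congr rfl fun j _ => ?_
  rw [sum_comm]
  refine sum_congr rfl fun k _ => ?_
  rw [← card_filter_string_mem_parts hm, ← sum_filter, sum_const, smul_eq_mul]

theorem mem_filter_triangular_iff {M n : ℕ} :
    n ∈ (Icc 1 M).filter (fun n => n * (n + 1) / 2 ≤ M ∧ n ∣ M - n * (n + 1) / 2) ↔
      0 < n ∧ ∃ s, n * s = 2 * M ∧ n < s ∧ Odd (n + s) := by
  have htri : 2 * (n * (n + 1) / 2) = n * (n + 1) :=
    Nat.mul_div_cancel' (Nat.even_mul_succ_self n).two_dvd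
  simp only [mem_filter, mem_Icc]
  constructor
  · rintro ⟨⟨hn, -⟩, hle, t, ht⟩
    refine ⟨hn, n + 1 + 2 * t, ?_, by omega, ⟨n + t, by ring⟩⟩
    have : n * (n + 1 + 2 * t) = n * (n + 1) + 2 * (n * t) := by ring
    omega
  · rintro ⟨hn, s, hs, hns, hodd⟩
    obtain ⟨t, rfl⟩ : ∃ t, s = n + 1 + 2 * t := by
      obtain ⟨r, hr⟩ := hodd
      exact ⟨r - n, by omega⟩
    have : n * (n + 1 + 2 * t) = n * (n + 1) + 2 * (n * t) := by ring
    have : n ≤ M := by nlinarith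
    exact ⟨⟨hn, by omega⟩, by omega, t, by omega⟩

theorem Odd.dvd_two_mul_two_pow_mul_iff {d : ℕ} (hd : Odd d) (α m₀ : ℕ) :
    d ∣ 2 * (2 ^ α * m₀) ↔ d ∣ m₀ := by
  rw [← mul_assoc, ← pow_succ']
  exact (Nat.Coprime.pow_right _ (Nat.coprime_two_right.mpr hd)).dvd_mul_left

theorem sum_neg_one_pow_triangular_eq_sum_divisors {R : Type*} [Ring R] {α m₀ : ℕ}
    (hm₀ : Odd m₀) :
    ∑ n ∈ Icc 1 (2 ^ α * m₀), (if n * (n + 1) / 2 ≤ 2 ^ α * m₀ ∧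
        n ∣ 2 ^ α * m₀ - n * (n + 1) / 2 then (-1 : R) ^ (n + 1) else 0) =
      ∑ d ∈ m₀.divisors, if d ^ 2 < 2 * (2 ^ α * m₀) then 1 else -1 := by
  set M := 2 ^ α * m₀
  have hmem : ∀ {d}, Odd d → d ∣ 2 * M → d ∈ m₀.divisors := fun hd hdvd =>
    Nat.mem_divisors.mpr ⟨(hd.dvd_two_mul_two_pow_mul_iff α m₀).mp hdvd, hm₀.pos.ne'⟩
  rw [← sum_filter]
  set A := (Icc 1 M).filter fun n => n * (n + 1) / 2 ≤ M ∧ n ∣ M - n * (n + 1) / 2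
  -- `n ∈ A` pairs `n` with its cofactor `s = 2M / n`; exactly one of them is odd
  have hA : ∀ n ∈ A, Odd n ∧ n ∈ m₀.divisors ∧ n ^ 2 < 2 * M ∨
      ¬ Odd n ∧ 2 * M / n ∈ m₀.divisors ∧ ¬ (2 * M / n) ^ 2 < 2 * M ∧ 2 * M / (2 * M / n) = n := by
    intro n hn
    obtain ⟨hn, s, hs, hns, hodd⟩ := mem_filter_triangular_iff.mp hn
    have hs' : 2 * M / n = s := Nat.div_eq_of_eq_mul_right hn hs.symm
    rw [hs']
    by_cases hn2 : Odd n
    · exact .inl ⟨hn2, hmem hn2 ⟨s, hs.symm⟩, by nlinarith⟩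
    · have hs2 : Odd s := Nat.not_even_iff_odd.mp fun he => hn2 ((Nat.odd_add.mp hodd).mpr he)
      exact .inr ⟨hn2, hmem hs2 ⟨n, by rw [← hs, mul_comm]⟩, by nlinarith,
        Nat.div_eq_of_eq_mul_right (by omega) (by rw [← hs, mul_comm])⟩
  have hB : ∀ d ∈ m₀.divisors, d ^ 2 < 2 * M ∧ d ∈ A ∧ Odd d ∨
      ¬ d ^ 2 < 2 * M ∧ 2 * M / d ∈ A ∧ ¬ Odd (2 * M / d) ∧ 2 * M / (2 * M / d) = d := by
    intro d hd
    have hd2 : Odd d := hm₀.of_dvd_nat (Nat.dvd_of_mem_divisors hd)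
    have hde : d * (2 * M / d) = 2 * M := Nat.mul_div_cancel' <|
      (hd2.dvd_two_mul_two_pow_mul_iff α m₀).mpr (Nat.dvd_of_mem_divisors hd)
    set e := 2 * M / d
    have he : Even e := (Nat.even_mul.mp (hde ▸ even_two_mul M)).resolve_left
      (Nat.not_even_iff_odd.mpr hd2)
    have hM : 0 < M := Nat.mul_pos (by positivity) hm₀.pos
    by_cases hlt : d ^ 2 < 2 * M
    · exact .inl ⟨hlt, mem_filter_triangular_iff.mpr ⟨hd2.pos, e, hde, by nlinarith,
        hd2.add_even he⟩, hd2⟩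
    · have he0 : 0 < e := Nat.pos_of_ne_zero fun h0 => by rw [h0, mul_zero] at hde; omega
      have hed : e < d := lt_of_le_of_ne
        (Nat.le_of_mul_le_mul_left (by nlinarith : d * e ≤ d * d) hd2.pos)
        fun h => Nat.not_even_iff_odd.mpr hd2 (h ▸ he)
      exact .inr ⟨hlt, mem_filter_triangular_iff.mpr ⟨he0, d, by rw [mul_comm, hde], hed,
        he.add_odd hd2⟩, Nat.not_odd_iff_even.mpr he, Nat.div_eq_of_eq_mul_left he0 hde.symm⟩
  refine sum_nbij' (fun n => if Odd n then n else 2 * M / n)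
    (fun d => if d ^ 2 < 2 * M then d else 2 * M / d) (fun n hn => ?_) (fun d hd => ?_)
    (fun n hn => ?_) (fun d hd => ?_) (fun n hn => ?_)
  · rcases hA n hn with h | h <;> simp [h]
  · rcases hB d hd with h | h <;> simp [h]
  · rcases hA n hn with h | h <;> simp [h]
  · rcases hB d hd with h | h <;> simp [h]
  · rcases hA n hn with ⟨h, -, h'⟩ | ⟨h, -, h', -⟩
    · simp [h, h', (h.add_one).neg_one_pow]
    · simp [h, h', (Nat.not_odd_iff_even.mp h).add_one.neg_one_pow]

theorem sum_range_ite_mul_add_eq {R : Type*} [AddCommMonoid R] {j : ℕ} (hj : 0 < j) (M : ℕ)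
    (w : ℕ → R) :
    ∑ k ∈ range (j + 1), (if j * (j + k) = M then w k else 0) =
      if j ∣ M ∧ j ≤ M / j ∧ M / j ≤ 2 * j then w (M / j - j) else 0 := by
  have hiff : ∀ k, j * (j + k) = M ↔ k = M / j - j ∧ j ∣ M ∧ j ≤ M / j := fun k => by
    constructor
    · rintro rfl
      rw [Nat.mul_div_cancel_left _ hj]
      exact ⟨by omega, dvd_mul_right _ _, le_add_right le_rfl⟩
    · rintro ⟨rfl, ⟨c, rfl⟩, hc⟩
      rw [Nat.mul_div_cancel_left _ hj] at hc ⊢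
      rw [Nat.add_sub_cancel' hc]
  rw [sum_congr rfl fun k _ => by rw [if_congr (hiff k) rfl rfl, ite_and],
    sum_ite_eq']
  by_cases h : j ∣ M ∧ j ≤ M / j
  · have hle : M / j - j ∈ range (j + 1) ↔ M / j ≤ 2 * j := by rw [mem_range]; omega
    simp only [h, hle, true_and, if_true]
  · simp only [h, if_false, ite_self]
    exact (if_neg fun h' => h ⟨h'.1, h'.2.1⟩).symm

theorem strWt_eq_add {j k : ℕ} (hj : 0 < j) (hk : k ≤ j) :
    strWt j k = (if k < j then 1 else 0) + if 0 < k then 1 else 0 := by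
  unfold strWt
  split_ifs <;> omega

theorem sum_Icc_sum_range_strWt {R : Type*} [AddCommMonoidWithOne R] {M N : ℕ} (hM : 0 < M)
    (hMN : M ≤ N) :
    ∑ j ∈ Icc 1 N, ∑ k ∈ range (j + 1), (if j * (j + k) = M then (strWt j k : R) else 0) =
      ∑ a ∈ M.divisors, if M < 2 * a ^ 2 ∧ a ^ 2 ≤ 2 * M then 1 else 0 := by
  have hdiv : (Icc 1 N).filter (· ∣ M) = M.divisors := by
    ext a
    simp only [mem_filter, mem_Icc, Nat.mem_divisors]
    exact ⟨fun h => ⟨h.2, hM.ne'⟩, fun h => ⟨⟨Nat.pos_of_dvd_of_pos h.1 hM,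
      (Nat.le_of_dvd hM h.1).trans hMN⟩, h.1⟩⟩
  calc _ = ∑ a ∈ M.divisors,
          if a ≤ M / a ∧ M / a ≤ 2 * a then (strWt a (M / a - a) : R) else 0 := by
        rw [← hdiv, sum_filter]
        refine sum_congr rfl fun j hj => ?_
        rw [sum_range_ite_mul_add_eq (mem_Icc.mp hj).1, ite_and]
    _ = ∑ a ∈ M.divisors, ((if a ≤ M / a ∧ M / a < 2 * a then 1 else 0) +
          if M / a < a ∧ a ≤ 2 * (M / a) then 1 else 0) := by
        rw [sum_add_distrib, ← Nat.sum_div_divisors M (fun a => if M / a < a ∧ a ≤ 2 * (M / a)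
          then (1 : R) else 0), ← sum_add_distrib]
        refine sum_congr rfl fun a ha => ?_
        have ha0 : 0 < a := Nat.pos_of_mem_divisors ha
        rw [Nat.div_div_self (Nat.dvd_of_mem_divisors ha) hM.ne']
        by_cases h : a ≤ M / a ∧ M / a ≤ 2 * a
        · rw [if_pos h, strWt_eq_add ha0 (by omega)]
          push_cast [Nat.cast_ite]
          congr 1 <;> exact if_congr (by omega) rfl rfl
        · rw [if_neg h, if_neg (by omega), if_neg (by omega), add_zero]
    _ = _ := by
        refine sum_congr rfl fun a ha => ?_
        have hab : a * (M / a) = M := Nat.mul_div_cancel' (Nat.dvd_of_mem_divisors ha)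
        have ha0 : 0 < a := Nat.pos_of_mem_divisors ha
        set b := M / a
        have hlt : M < 2 * a ^ 2 ↔ b < 2 * a := by
          rw [← hab, sq, show 2 * (a * a) = a * (2 * a) by ring]
          exact Nat.mul_lt_mul_left ha0
        have hle : a ^ 2 ≤ 2 * M ↔ a ≤ 2 * b := by
          rw [← hab, sq, show 2 * (a * b) = a * (2 * b) by ring]
          exact Nat.mul_le_mul_left_iff ha0
        rw [if_congr (and_congr hlt hle) rfl rfl]
        split_ifs <;> first | (exfalso; omega) | simp

theorem Nat.sum_divisors_two_pow_mul {R : Type*} [AddCommMonoid R] {m₀ : ℕ} (hm₀ : Odd m₀)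
    (α : ℕ) (f : ℕ → R) :
    ∑ a ∈ (2 ^ α * m₀).divisors, f a = ∑ d ∈ m₀.divisors, ∑ β ∈ range (α + 1), f (2 ^ β * d) := by
  rw [(Nat.Coprime.pow_left α (Nat.coprime_two_left.mpr hm₀)).divisors_mul, sum_map]
  refine (sum_attach _ fun p : ℕ × ℕ => f (p.1 * p.2)).trans ?_
  rw [sum_product_right, Nat.divisors_prime_pow Nat.prime_two]
  simp only [sum_map]
  rfl

theorem sum_range_ite_lt_two_mul_sq {R : Type*} [AddCommGroup R] [One R] (M d α : ℕ) :
    ∑ β ∈ range (α + 1), (if M < 2 * (2 ^ β * d) ^ 2 ∧ (2 ^ β * d) ^ 2 ≤ 2 * M then 1 else 0 : R) =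
      (if d ^ 2 ≤ 2 * M then 1 else 0) - if (2 ^ (α + 1) * d) ^ 2 ≤ 2 * M then 1 else 0 := by
  have htel := sum_range_sub' (fun β => if (2 ^ β * d) ^ 2 ≤ 2 * M then (1 : R) else 0) (α + 1)
  rw [pow_zero, one_mul] at htel
  rw [← htel]
  refine sum_congr rfl fun β _ => ?_
  have h4 : (2 ^ (β + 1) * d) ^ 2 = 4 * (2 ^ β * d) ^ 2 := by ring
  rw [h4]
  split_ifs <;> first | (exfalso; omega) | simp

theorem sq_mul_le_iff_le_sq {c d e : ℕ} (hc : 0 < c) (hd : 0 < d) (he : 0 < e) :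
    (c * e) ^ 2 ≤ c * (d * e) ↔ c * (d * e) ≤ d ^ 2 := by
  have h1 : (c * e) ^ 2 ≤ c * (d * e) ↔ c * e ≤ d := by
    rw [sq, show c * (d * e) = c * e * d by ring]
    exact Nat.mul_le_mul_left_iff (Nat.mul_pos hc he)
  have h2 : c * (d * e) ≤ d ^ 2 ↔ c * e ≤ d := by
    rw [sq, show c * (d * e) = d * (c * e) by ring]
    exact Nat.mul_le_mul_left_iff hd
  rw [h1, h2]

theorem sum_divisors_ite_lt_two_mul_sq {R : Type*} [AddCommGroup R] [One R] {α m₀ : ℕ}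
    (hm₀ : Odd m₀) :
    ∑ a ∈ (2 ^ α * m₀).divisors,
        (if 2 ^ α * m₀ < 2 * a ^ 2 ∧ a ^ 2 ≤ 2 * (2 ^ α * m₀) then 1 else 0 : R) =
      ∑ d ∈ m₀.divisors, if d ^ 2 < 2 * (2 ^ α * m₀) then 1 else -1 := by
  set M := 2 ^ α * m₀
  have hM : 2 * M = 2 ^ (α + 1) * m₀ := by rw [pow_succ]; ring
  rw [Nat.sum_divisors_two_pow_mul hm₀]
  simp_rw [sum_range_ite_lt_two_mul_sq]
  rw [sum_sub_distrib, ← Nat.sum_div_divisors m₀ (fun d => if (2 ^ (α + 1) * d) ^ 2 ≤ 2 * M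
    then (1 : R) else 0), ← sum_sub_distrib]
  refine sum_congr rfl fun d hd => ?_
  have hd2 : Odd d := hm₀.of_dvd_nat (Nat.dvd_of_mem_divisors hd)
  have he : 0 < m₀ / d := Nat.div_pos (Nat.divisor_le hd) hd2.pos
  have hde : d * (m₀ / d) = m₀ := Nat.mul_div_cancel' (Nat.dvd_of_mem_divisors hd)
  set e := m₀ / d
  have hflip : (2 ^ (α + 1) * e) ^ 2 ≤ 2 * M ↔ 2 * M ≤ d ^ 2 := by
    rw [hM, ← hde]
    exact sq_mul_le_iff_le_sq (by positivity) hd2.pos he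
  have hne : d ^ 2 ≠ 2 * M := fun h =>
    Nat.not_even_iff_odd.mpr hd2.pow (h ▸ even_two_mul M)
  rw [if_congr hflip rfl rfl]
  split_ifs <;> first | (exfalso; omega) | simp

theorem coeff_h_eq_sum_strWt {M N : ℕ} (hMN : M ≤ N) :
    coeff M h = ∑ j ∈ Icc 1 N, ∑ k ∈ range (j + 1),
      if j * (j + k) = M then (strWt j k : ℝ) else 0 := by
  rcases Nat.eq_zero_or_pos M with rfl | hM
  · rw [h, coeff_mk, Icc_eq_empty_of_lt zero_lt_one, sum_empty]
    refine (sum_eq_zero fun j hj => sum_eq_zero fun k _ => if_neg ?_).symm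
    have hj1 := (mem_Icc.mp hj).1
    exact Nat.mul_ne_zero (by omega) (by omega)
  obtain ⟨α, m₀, hm₀, rfl⟩ := Nat.exists_eq_two_pow_mul_odd hM.ne'
  rw [h, coeff_mk, sum_neg_one_pow_triangular_eq_sum_divisors hm₀,
    ← sum_divisors_ite_lt_two_mul_sq hm₀, sum_Icc_sum_range_strWt hM hMN]

theorem coeff_substPow_h_eq_sum_strWt {m : ℕ} (hm : 0 < m) {b N : ℕ} (hbN : b ≤ N) :
    coeff b (substPow m h) = ∑ j ∈ Icc 1 N, ∑ k ∈ range (j + 1),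
      if m * (j * (j + k)) = b then (strWt j k : ℝ) else 0 := by
  rw [substPow, coeff_mk]
  split_ifs with hdvd
  · obtain ⟨M, rfl⟩ := hdvd
    rw [Nat.mul_div_cancel_left M hm,
      coeff_h_eq_sum_strWt ((Nat.le_mul_of_pos_left M hm).trans hbN)]
    simp only [Nat.mul_left_cancel_iff hm]
  · exact (sum_eq_zero fun j _ => sum_eq_zero fun k _ =>
      if_neg fun heq => hdvd ⟨_, heq.symm⟩).symm

/-- Kim–Kim–Seo combinatorial interpretation:
the coefficient of `q^N` in `(1/(q;q)_∞) h(q^m)` is `C_m(N)`. -/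
theorem kim_kim_seo_interpretation (m : ℕ) (hm : 1 ≤ m) (N : ℕ) :
    PowerSeries.coeff N (euler⁻¹ * substPow m h) = (Cstr m N : ℝ) := by
  calc coeff N (euler⁻¹ * substPow m h)
      = ∑ x ∈ antidiagonal N, ∑ j ∈ Icc 1 N, ∑ k ∈ range (j + 1),
          if x.2 = m * (j * (j + k)) then (Fintype.card x.1.Partition : ℝ) * strWt j k else 0 := by
        rw [coeff_mul]
        refine sum_congr rfl fun x hx => ?_
        rw [coeff_inv_euler,
          coeff_substPow_h_eq_sum_strWt hm (Finset.HasAntidiagonal.antidiagonal.snd_le hx)]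
        simp_rw [mul_sum, mul_ite, mul_zero, eq_comm]
    _ = ∑ j ∈ Icc 1 N, ∑ k ∈ range (j + 1), (if m * (j * (j + k)) ≤ N then
          (Fintype.card (N - m * (j * (j + k))).Partition : ℝ) else 0) * strWt j k := by
        rw [sum_comm]
        refine sum_congr rfl fun j _ => ?_
        rw [sum_comm]
        refine sum_congr rfl fun k _ => ?_
        rw [← sum_filter, Finset.HasAntidiagonal.filter_snd_eq_antidiagonal N (m * (j * (j + k)))]
        split_ifs <;> simp
    _ = Cstr m N := by
        rw [Cstr_eq_sum hm]
        push_cast [Nat.cast_ite]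
        rfl
end
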